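/- The binary word p = 10 does not have an internal zero at any n ≥ 0; equivalently, for every n and every k with 0 ≤ k ≤ M_{n,10}, there exists a binary word of length n with exactly k occurrences of 10. -/

import Mathlib

/-- `occ p w` is the number of occurrences of `p` as a subsequence of `w`,
i.e. the number of choices of indices `i₁ < ⋯ < i_l` in `w` matching `p`. -/
def occ (p w : List Bool) : ℕ := w.sublists.count p

/-- `B n p k` is the number of binary words of length `n` with exactly `k` occurrences of `p`. -/
noncomputable def B (n : ℕ) (p : List Bool) (k : ℕ) : ℕ :=
  Nat.card {w : List Bool // w.length = n ∧ occ p w = k}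

/-- The list of runs (maximal blocks of consecutive equal letters) of a binary word. -/
def runs (p : List Bool) : List (List Bool) := p.splitBy (· == ·)

/-- The number of runs of a binary word. -/
def numRuns (p : List Bool) : ℕ := (runs p).length

/-- The number of runs of size `i` of a binary word. -/
def numRunsOfSize (p : List Bool) (i : ℕ) : ℕ := ((runs p).map List.length).count i

/-- `maxOcc n p` is the maximum number of occurrences of `p` among binary words of length `n`. -/
noncomputable def maxOcc (n : ℕ) (p : List Bool) : ℕ :=
  sSup {k | ∃ w : List Bool, w.length = n ∧ occ p w = k}

/-- `p` has an internal zero at `n` if the sequence `(B n p k)_{k ≥ 0}` has an internal zero. -/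
def HasInternalZeroAt (p : List Bool) (n : ℕ) : Prop :=
  ∃ k₁ k₂ k₃ : ℕ, k₁ < k₂ ∧ k₂ < k₃ ∧ B n p k₁ ≠ 0 ∧ B n p k₂ = 0 ∧ B n p k₃ ≠ 0

/-! An occurrence of `10` in `w` is a `true` followed later by a `false`, so
`occ [true, false] w ≤ #true · #false ≤ ⌊n/2⌋ ⌈n/2⌉`. Conversely every `k` up to this bound is
attained, by induction on the number `a` of `true`s: appending a `true` does not change the count,
and `trueᵃ falseᵇ⁻ʳ true falseʳ` has exactly `ab + r` occurrences. Hence the attained values form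
an initial segment of `ℕ`, which leaves no room for an internal zero. -/

theorem occ_nil (w : List Bool) : occ [] w = 1 := by
  induction w with
  | nil => rfl
  | cons a w ih =>
    unfold occ at *
    rw [(List.sublists_cons_perm_append a w).count_eq, List.count_append, ih,
      List.count_eq_zero.2 (by simp)]

@[simp]
theorem occ_cons_nil (b : Bool) (p : List Bool) : occ (b :: p) [] = 0 := rfl

theorem occ_cons_cons (a b : Bool) (p w : List Bool) :
    occ (b :: p) (a :: w) = occ (b :: p) w + if a = b then occ p w else 0 := by
  unfold occ
  rw [(List.sublists_cons_perm_append a w).count_eq, List.count_append]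
  split_ifs with h
  · subst h
    rw [List.count_map_of_injective _ _ List.cons_injective]
  · have : b :: p ∉ w.sublists.map (List.cons a) := by simp [h]
    rw [List.count_eq_zero.2 this]

theorem occ_singleton (b : Bool) (w : List Bool) : occ [b] w = w.count b := by
  induction w with
  | nil => rfl
  | cons a w ih => rw [occ_cons_cons, ih, occ_nil, List.count_cons]; simp

theorem occ10_cons (a : Bool) (w : List Bool) :
    occ [true, false] (a :: w) = occ [true, false] w + if a then w.count false else 0 := by
  rw [occ_cons_cons, occ_singleton]

theorem occ10_append (u v : List Bool) :
    occ [true, false] (u ++ v)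
      = occ [true, false] u + occ [true, false] v + u.count true * v.count false := by
  induction u with
  | nil => simp [occ]
  | cons a u ih =>
    rw [List.cons_append, occ10_cons, occ10_cons, ih, List.count_append, List.count_cons]
    cases a
    · simp
    · simp only [if_true, BEq.rfl]
      ring

theorem occ10_replicate (m : ℕ) (b : Bool) : occ [true, false] (List.replicate m b) = 0 := by
  induction m with
  | zero => rfl
  | succ m ih => cases b <;> simp [List.replicate_succ, occ10_cons, ih, List.count_replicate]

theorem occ10_le_count_mul_count (w : List Bool) :
    occ [true, false] w ≤ w.count true * w.count false := by
  induction w with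
  | nil => simp [occ]
  | cons a w ih => cases a <;> simp [occ10_cons] <;> nlinarith

theorem mul_le_half_mul_half {a b n : ℕ} (h : a + b = n) : a * b ≤ n / 2 * (n - n / 2) := by
  have key : ∀ x y : ℕ, x + y = n → x ≤ n / 2 → x * y ≤ n / 2 * (n - n / 2) := by
    intro x y hxy hx
    obtain ⟨d, hd⟩ : ∃ d, n / 2 = x + d := ⟨n / 2 - x, by omega⟩
    obtain ⟨e, he⟩ : ∃ e, n - n / 2 = x + e := ⟨n - n / 2 - x, by omega⟩
    rw [he, hd, show y = x + d + e by omega]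
    nlinarith
  rcases le_or_gt a (n / 2) with ha | ha
  · exact key a b h ha
  · rw [mul_comm]
    exact key b a (by omega) (by omega)

theorem occ10_le (w : List Bool) :
    occ [true, false] w ≤ w.length / 2 * (w.length - w.length / 2) :=
  (occ10_le_count_mul_count w).trans (mul_le_half_mul_half (List.count_true_add_count_false w))

theorem exists_occ10_eq {a b k : ℕ} (hk : k ≤ a * b) :
    ∃ w : List Bool, w.length = a + b ∧ occ [true, false] w = k := by
  induction a generalizing k with
  | zero => exact ⟨List.replicate b false, by simp, by simp_all [occ10_replicate]⟩
  | succ a ih =>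
    by_cases hab : k ≤ a * b
    · obtain ⟨w, hlen, hocc⟩ := ih hab
      refine ⟨w ++ [true], by simp [hlen]; ring, ?_⟩
      simp [occ10_append, occ10_cons, hocc]
    · obtain ⟨r, rfl⟩ : ∃ r, k = a * b + r := ⟨k - a * b, by omega⟩
      have hr : r ≤ b := by nlinarith
      refine ⟨List.replicate a true ++ (List.replicate (b - r) false ++ true :: List.replicate r false),
        by simp; omega, ?_⟩
      simp [occ10_append, occ10_cons, occ10_replicate, List.count_replicate, Nat.sub_add_cancel hr,
        add_comm]

theorem exists_occ10_eq_iff (n k : ℕ) :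
    (∃ w : List Bool, w.length = n ∧ occ [true, false] w = k) ↔ k ≤ n / 2 * (n - n / 2) := by
  constructor
  · rintro ⟨w, rfl, rfl⟩
    exact occ10_le w
  · intro hk
    simpa [Nat.add_sub_cancel' (Nat.div_le_self n 2)] using exists_occ10_eq hk

theorem maxOcc10 (n : ℕ) : maxOcc n [true, false] = n / 2 * (n - n / 2) := by
  unfold maxOcc
  simp only [exists_occ10_eq_iff]
  exact csSup_Iic

theorem B_ne_zero_iff (n k : ℕ) (p : List Bool) :
    B n p k ≠ 0 ↔ ∃ w : List Bool, w.length = n ∧ occ p w = k := by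
  have : Finite {w : List Bool // w.length = n ∧ occ p w = k} :=
    ((List.finite_length_eq Bool n).subset fun _ hw => hw.1).to_subtype
  simp [B, Nat.card_ne_zero, this]

theorem word10_no_internalZero :
    (∀ n : ℕ, ¬ HasInternalZeroAt [true, false] n) ∧
    (∀ n k : ℕ, k ≤ maxOcc n [true, false] →
      ∃ w : List Bool, w.length = n ∧ occ [true, false] w = k) := by
  refine ⟨?_, fun n k hk => (exists_occ10_eq_iff n k).2 (maxOcc10 n ▸ hk)⟩
  rintro n ⟨k₁, k₂, k₃, -, h₂₃, -, hB₂, hB₃⟩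
  rw [B_ne_zero_iff, exists_occ10_eq_iff] at hB₃
  exact (B_ne_zero_iff n k₂ _).2 ((exists_occ10_eq_iff n k₂).2 (by omega)) hB₂
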